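/- At any pure-strategy Nash equilibrium of the matching game, each proposer's utility is at most their utility in the proposer-optimal stable match: if the action profile a is a Nash equilibrium, then u_i(a) ≤ O_{P_i}(μ*_{P_i}) for every proposer P_i, where μ* is the proposer-optimal stable match. -/

import Mathlib

set_option linter.unusedSectionVars false
/-- A two-sided matching market with proposers `P` and acceptors `A`.
`OP i` is proposer `i`'s preference function over `A ∪ {∅}` (where `none` is `∅`),
and `OA j` is acceptor `j`'s preference function over `P ∪ {∅}`. -/
structure Market (P A : Type) [Fintype P] [Fintype A] where
  OP : P → Option A → ℝ
  OA : A → Option P → ℝ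
  OP_inj : ∀ i, Function.Injective (OP i)
  OA_inj : ∀ j, Function.Injective (OA j)
  OP_none : ∀ i, OP i none = 0
  OA_none : ∀ j, OA j none = 0
  OP_pos : ∀ i j, 0 < OP i (some j)
  OA_pos : ∀ j i, 0 < OA j (some i)
  OP_le_one : ∀ i o, OP i o ≤ 1
  OA_le_one : ∀ j o, OA j o ≤ 1

/-- A match: each proposer gets a partner in `A ∪ {∅}`, each acceptor a partner
in `P ∪ {∅}`, consistently. -/
structure Matching (P A : Type) where
  μP : P → Option A
  μA : A → Option P
  consistent : ∀ i j, μP i = some j ↔ μA j = some i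

/-- A match is stable if there is no proposer–acceptor pair who strictly prefer
each other to their assigned partners. -/
def Stable {P A : Type} [Fintype P] [Fintype A] (M : Market P A) (μ : Matching P A) : Prop :=
  ¬ ∃ (i : P) (j : A), M.OP i (some j) > M.OP i (μ.μP i) ∧ M.OA j (some i) > M.OA j (μ.μA j)

variable {P A : Type} [Fintype P] [Fintype A] [DecidableEq P] [DecidableEq A]

/-- Given an action profile `a`, acceptor `j` accepts its most preferred
proposer among those proposing to it (if any). -/
noncomputable def accept (M : Market P A) (a : P → Option A) (j : A) : Option P :=
  if h : (Finset.univ.filter fun i => a i = some j).Nonempty then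
    some (Classical.choose
      ((Finset.univ.filter fun i => a i = some j).exists_max_image
        (fun i => M.OA j (some i)) h))
  else none

theorem accept_spec {M : Market P A} {a : P → Option A} {j : A} {i : P}
    (h : accept M a j = some i) :
    a i = some j ∧ ∀ i', a i' = some j → M.OA j (some i') ≤ M.OA j (some i) := by
  unfold accept at h
  split_ifs at h with hne
  · obtain ⟨hmem, hmax⟩ := Classical.choose_spec
      ((Finset.univ.filter fun i => a i = some j).exists_max_image
        (fun i => M.OA j (some i)) hne)
    have hi : Classical.choose
        ((Finset.univ.filter fun i => a i = some j).exists_max_image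
          (fun i => M.OA j (some i)) hne) = i := Option.some_injective _ h
    rw [hi] at hmem hmax
    refine ⟨by simpa using hmem, fun i' hi' => hmax i' (by simpa using hi')⟩

theorem accept_of_propose {M : Market P A} {a : P → Option A} {j : A} {i : P}
    (h : a i = some j) : ∃ i', accept M a j = some i' := by
  unfold accept
  have hne : (Finset.univ.filter fun i => a i = some j).Nonempty :=
    ⟨i, by simpa using h⟩
  rw [dif_pos hne]
  exact ⟨_, rfl⟩

/-- The match resulting from an action profile `a`. -/
noncomputable def matchOf (M : Market P A) (a : P → Option A) : Matching P A where
  μP i := (a i).bind fun j => if accept M a j = some i then some j else none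
  μA j := accept M a j
  consistent := by
    intro i j
    constructor
    · intro h
      rcases Option.bind_eq_some_iff.mp h with ⟨j', hj', hif⟩
      by_cases hc : accept M a j' = some i
      · rw [if_pos hc] at hif
        exact (Option.some_injective _ hif) ▸ hc
      · rw [if_neg hc] at hif
        exact absurd hif (by simp)
    · intro h
      have hai : a i = some j := (accept_spec h).1
      show (a i).bind _ = some j
      rw [hai]
      simp [h]

/-- The utility of proposer `i` under action profile `a`. -/
noncomputable def util (M : Market P A) (a : P → Option A) (i : P) : ℝ :=
  M.OP i ((matchOf M a).μP i)

/-- Pure Nash equilibrium: no proposer can strictly increase its utility by a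
unilateral deviation. -/
def IsNash (M : Market P A) (a : P → Option A) : Prop :=
  ∀ (i : P) (a' : Option A), util M (Function.update a i a') i ≤ util M a i

/- A proposer `i` in a blocking pair with `j` could switch to proposing to `j`: since `j` prefers
`i` to everyone currently proposing to it, `j` accepts `i`. So at a Nash equilibrium the
resulting match has no blocking pair, and proposer-optimality of `μstar` bounds every utility. -/

theorem accept_update_eq_some_of_lt {M : Market P A} {a : P → Option A} {i : P} {j : A}
    (hlt : M.OA j (accept M a j) < M.OA j (some i)) :
    accept M (Function.update a i (some j)) j = some i := by
  obtain ⟨i', hi'⟩ := accept_of_propose (M := M) (Function.update_self i (some j) a)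
  obtain ⟨hpropose, hbest⟩ := accept_spec hi'
  by_contra hne
  have hne' : i' ≠ i := fun h => hne (h ▸ hi')
  have hai' : a i' = some j := by rwa [Function.update_of_ne hne'] at hpropose
  obtain ⟨i₀, hi₀⟩ := accept_of_propose (M := M) hai'
  rw [hi₀] at hlt
  have hi'_le : M.OA j (some i') ≤ M.OA j (some i₀) := (accept_spec hi₀).2 i' hai'
  have hi_le : M.OA j (some i) ≤ M.OA j (some i') := hbest i (Function.update_self i (some j) a)
  linarith

theorem util_update_of_lt {M : Market P A} {a : P → Option A} {i : P} {j : A}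
    (hlt : M.OA j ((matchOf M a).μA j) < M.OA j (some i)) :
    util M (Function.update a i (some j)) i = M.OP i (some j) := by
  have hmatched : (matchOf M _).μP i = some j :=
    ((matchOf M _).consistent i j).mpr (accept_update_eq_some_of_lt hlt)
  rw [util, hmatched]

theorem IsNash.stable {M : Market P A} {a : P → Option A} (hnash : IsNash M a) :
    Stable M (matchOf M a) := by
  rintro ⟨i, j, hP, hA⟩
  have hdev := hnash i (some j)
  rw [util_update_of_lt hA, util] at hdev
  linarith

theorem nash_utility_le_posm_general
    (M : Market P A) (μstar : Matching P A)
    (hopt : ∀ μ' : Matching P A, Stable M μ' →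
      ∀ i : P, M.OP i (μ'.μP i) ≤ M.OP i (μstar.μP i))
    (a : P → Option A) (hnash : IsNash M a) :
    ∀ i : P, util M a i ≤ M.OP i (μstar.μP i) :=
  hopt _ hnash.stable

/-- At any pure Nash equilibrium, each proposer's utility is at most its utility
in the proposer-optimal stable match. -/
theorem nash_utility_le_posm [Nonempty P] [Nonempty A]
    (M : Market P A) (μstar : Matching P A)
    (hstable : Stable M μstar)
    (hopt : ∀ μ' : Matching P A, Stable M μ' →
      ∀ i : P, M.OP i (μ'.μP i) ≤ M.OP i (μstar.μP i))
    (a : P → Option A) (hnash : IsNash M a) :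
    ∀ i : P, util M a i ≤ M.OP i (μstar.μP i) :=
  nash_utility_le_posm_general M μstar hopt a hnash
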